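/- arXiv:1602.03698 — 2 statements merged into one kernel-verified Lean document; each statement's English description precedes it below -/
import Mathlib

section
/- Let n and k be integers with 1 ≤ k ≤ n/2 and let G be a connected simple graph on n vertices with minimum degree at least k. If R'(G) = n/2 − (1/2)·(1/k − 1/(n−1))·k·(n−k), then G is isomorphic to the complete split graph K*_{k,n−k}. -/
open scoped Classical

/-- The variation of the Randić index: `R'(G) = ∑_{uv ∈ E(G)} 1 / max(d(u), d(v))`. -/
noncomputable def Rvar {V : Type*} [Fintype V] (G : SimpleGraph V) : ℝ :=
  ∑ e ∈ G.edgeFinset,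
    Sym2.lift ⟨fun u v => (1 : ℝ) / (max (G.degree u) (G.degree v) : ℕ),
      fun u v => by dsimp only; rw [max_comm]⟩ e

/-- The complete split graph `K*_{k,n-k}` on `n` vertices: the first `k` vertices form a
clique and are adjacent to all other vertices; the remaining `n - k` vertices form an
independent set. -/
def completeSplitGraph (n k : ℕ) : SimpleGraph (Fin n) where
  Adj u v := u ≠ v ∧ ((u : ℕ) < k ∨ (v : ℕ) < k)
  symm := ⟨fun _ _ h => ⟨h.1.symm, h.2.symm⟩⟩
  loopless := ⟨fun _ h => h.1 rfl⟩

/-!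
Put `w j = 1/j - 1/(j+1)`, so that `1/a - 1/b = ∑_{a ≤ j < b} w j`. Every vertex `v` contributes
`d(v) · 1/d(v) = 1` to `∑_{uv ∈ E} (1/d(u) + 1/d(v))`, hence
`n - 2R'(G) = ∑_{uv ∈ E} |1/d(u) - 1/d(v)| = ∑_{k ≤ j < n-1} w j · c j`, where `c j` counts the
ordered edges from a vertex of degree `≤ j` to one of degree `> j`.

Let `p` be the `k`-th largest degree and `A` a set of `k` vertices of degree `≥ p`. For `j < p`,
bound `c j` by the total degree of the vertices of degree `≤ j`; summed over `j` this gives at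
most `∑_{v ∉ A} (1 - min(d(v), p)/p) ≤ (n-k)(1 - k/p)`. For `j ≥ p`, fewer than `k` vertices have
degree `> j`, so `c j ≤ (n-k+1)(k-1)`. Altogether
`n - 2R'(G) ≤ (n-k)(1 - k/(n-1)) - (n+1-2k)(1/p - 1/(n-1))`, so equality forces `p = n-1`, and
then every vertex outside `A` has degree exactly `k` while the vertices of `A` are universal.
-/

open Finset

lemma sum_Ico_inv_sub_inv {K : Type*} [DivisionRing K] {a b : ℕ} (hab : a ≤ b) :
    ∑ j ∈ Ico a b, ((j : K)⁻¹ - ((j : K) + 1)⁻¹) = (a : K)⁻¹ - (b : K)⁻¹ := by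
  rw [← neg_sub, ← Finset.sum_Ico_sub (fun j : ℕ => (j : K)⁻¹) hab, ← sum_neg_distrib]
  push_cast
  simp only [neg_sub]

lemma inv_sub_inv_add_one_nonneg {j : ℕ} (hj : 0 < j) : 0 ≤ (j : ℝ)⁻¹ - ((j : ℝ) + 1)⁻¹ := by
  have hj' : (0 : ℝ) < j := by exact_mod_cast hj
  rw [sub_nonneg]
  exact inv_anti₀ hj' (by linarith)

lemma mul_sum_Ico_inv_sub_inv {d a : ℕ} (hd : 0 < d) (ha : 0 < a) :
    (d : ℝ) * ∑ j ∈ Ico d a, ((j : ℝ)⁻¹ - ((j : ℝ) + 1)⁻¹) = 1 - (min d a : ℕ) / (a : ℝ) := by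
  rcases le_total d a with h | h
  · rw [sum_Ico_inv_sub_inv h, min_eq_left h]
    field_simp
  · rw [Ico_eq_empty_of_le h, min_eq_right h]
    field_simp
    simp

lemma inv_sub_inv_max_eq_sum_Ico {k N a b : ℕ} (ha : k ≤ a) (hb : b ≤ N) :
    (a : ℝ)⁻¹ - ((max a b : ℕ) : ℝ)⁻¹ =
      ∑ j ∈ Ico k N, if a ≤ j ∧ j < b then (j : ℝ)⁻¹ - ((j : ℝ) + 1)⁻¹ else 0 := by
  rw [← sum_filter]
  have hIco : {j ∈ Ico k N | a ≤ j ∧ j < b} = Ico a b := by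
    ext j
    simp only [mem_filter, mem_Ico]
    omega
  rw [hIco]
  rcases le_total a b with h | h
  · rw [max_eq_right h, sum_Ico_inv_sub_inv h]
  · rw [max_eq_left h, Ico_eq_empty_of_le h, sum_empty, sub_self]

lemma Finset.forall_eq_of_le_of_card_nsmul_le_sum {ι M : Type*} [AddCommMonoid M] [PartialOrder M]
    [IsOrderedCancelAddMonoid M] {s : Finset ι} {f : ι → M} {c : M} (hf : ∀ i ∈ s, f i ≤ c)
    (hsum : #s • c ≤ ∑ i ∈ s, f i) : ∀ i ∈ s, f i = c :=
  (sum_eq_sum_iff_of_le hf).1 (le_antisymm (sum_le_sum hf) (by rwa [sum_const]))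

namespace SimpleGraph

variable {V : Type*} [Fintype V] (G : SimpleGraph V)

lemma degree_le_card_sub_one (v : V) : G.degree v ≤ Fintype.card V - 1 :=
  Nat.le_sub_one_of_lt (G.degree_lt_card_verts v)

lemma sum_darts_fst {M : Type*} [AddCommMonoid M] (g : V → M) :
    ∑ d : G.Dart, g d.fst = ∑ v, G.degree v • g v := by
  rw [← sum_fiberwise univ (fun d : G.Dart => d.fst)]
  refine sum_congr rfl fun v _ => ?_
  rw [sum_congr rfl fun d hd => congrArg g (mem_filter.1 hd).2, sum_const,
    G.dart_fst_fiber_card_eq_degree]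

lemma sum_darts_edge {M : Type*} [AddCommMonoid M] (f : Sym2 V → M) :
    ∑ d : G.Dart, f d.edge = 2 • ∑ e ∈ G.edgeFinset, f e := by
  rw [← sum_fiberwise_of_maps_to (t := G.edgeFinset) (fun d _ => mem_edgeFinset.2 d.edge_mem),
    smul_sum]
  refine sum_congr rfl fun e he => ?_
  rw [sum_congr rfl fun d hd => congrArg f (mem_filter.1 hd).2, sum_const,
    G.dart_edge_fiber_card e (mem_edgeFinset.1 he)]

noncomputable def cutDarts (s : Finset V) : Finset G.Dart := {d | d.fst ∈ s ∧ d.snd ∉ s}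

lemma card_cutDarts_le_sum_degree (s : Finset V) :
    #(G.cutDarts s) ≤ ∑ v ∈ s, G.degree v := by
  calc #(G.cutDarts s) ≤ #({d : G.Dart | d.fst ∈ s}) :=
        card_le_card fun d hd => by simp_all [cutDarts]
    _ = ∑ v ∈ s, #({d : G.Dart | d.fst = v}) := by
        rw [card_eq_sum_card_fiberwise (s := {d : G.Dart | d.fst ∈ s}) (t := s)
          fun d hd => (mem_filter.1 hd).2]
        refine sum_congr rfl fun v hv => congrArg card ?_
        ext d
        simp only [mem_filter, mem_univ, true_and, and_iff_right_iff_imp]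
        exact fun h => h ▸ hv
    _ = ∑ v ∈ s, G.degree v := sum_congr rfl fun v _ => G.dart_fst_fiber_card_eq_degree v

lemma card_cutDarts_le_card_mul_card_compl (s : Finset V) :
    #(G.cutDarts s) ≤ #s * #sᶜ := by
  rw [← card_product]
  refine card_le_card_of_injOn Dart.toProd (fun d hd => ?_) Dart.toProd_injective.injOn
  simp only [cutDarts, coe_filter, mem_univ, true_and] at hd
  simpa [mem_product] using hd

noncomputable def degreeCut (j : ℕ) : ℕ := #(G.cutDarts {v | G.degree v ≤ j})

theorem card_sub_two_mul_rvar_eq_sum_degreeCut {k : ℕ} (hk : 0 < k)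
    (hmin : ∀ v, k ≤ G.degree v) :
    (Fintype.card V : ℝ) - 2 * Rvar G =
      ∑ j ∈ Ico k (Fintype.card V - 1), ((j : ℝ)⁻¹ - ((j : ℝ) + 1)⁻¹) * G.degreeCut j := by
  have h2R : 2 * Rvar G =
      ∑ d : G.Dart, ((max (G.degree d.fst) (G.degree d.snd) : ℕ) : ℝ)⁻¹ := by
    rw [two_mul, ← two_nsmul, Rvar, ← sum_darts_edge]
    simp [Dart.edge]
  have hcard : (Fintype.card V : ℝ) = ∑ d : G.Dart, ((G.degree d.fst : ℕ) : ℝ)⁻¹ := by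
    rw [G.sum_darts_fst fun v => ((G.degree v : ℕ) : ℝ)⁻¹]
    have hdeg : ∀ v, (G.degree v : ℝ) ≠ 0 := fun v => Nat.cast_ne_zero.2 (hk.trans_le (hmin v)).ne'
    simp [nsmul_eq_mul, mul_inv_cancel₀ (hdeg _)]
  rw [hcard, h2R, ← sum_sub_distrib, sum_congr rfl fun d _ =>
    inv_sub_inv_max_eq_sum_Ico (hmin d.fst) (G.degree_le_card_sub_one d.snd), sum_comm]
  refine sum_congr rfl fun j _ => ?_
  rw [← sum_filter, sum_const, nsmul_eq_mul, mul_comm]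
  simp [degreeCut, cutDarts]

noncomputable def degreeDeficit (p : ℕ) (v : V) : ℝ := 1 - (min (G.degree v) p : ℕ) / (p : ℝ)

lemma degreeDeficit_le {k p : ℕ} {v : V} (hkv : k ≤ G.degree v) (hkp : k ≤ p) :
    G.degreeDeficit p v ≤ 1 - k / p := by
  unfold degreeDeficit
  gcongr
  exact_mod_cast le_min hkv hkp

lemma sum_compl_degreeDeficit_le {k p : ℕ} (hmin : ∀ v, k ≤ G.degree v) (hkp : k ≤ p)
    {A : Finset V} (hA : #A = k) :
    ∑ v ∈ Aᶜ, G.degreeDeficit p v ≤ (Fintype.card V - k) * (1 - k / p) := by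
  have hsum := sum_le_card_nsmul Aᶜ _ _ fun v _ => G.degreeDeficit_le (hmin v) hkp
  rwa [nsmul_eq_mul, card_compl, hA, Nat.cast_sub (hA ▸ card_le_univ A)] at hsum

lemma sum_Ico_degreeCut_le {k a : ℕ} (hk : 0 < k) (ha : 0 < a) (hmin : ∀ v, k ≤ G.degree v) :
    ∑ j ∈ Ico k a, ((j : ℝ)⁻¹ - ((j : ℝ) + 1)⁻¹) * G.degreeCut j ≤ ∑ v, G.degreeDeficit a v := by
  calc _ ≤ ∑ j ∈ Ico k a, ((j : ℝ)⁻¹ - ((j : ℝ) + 1)⁻¹) *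
          ∑ v ∈ {v | G.degree v ≤ j}, (G.degree v : ℝ) := by
        gcongr with j hj
        · exact inv_sub_inv_add_one_nonneg (hk.trans_le (mem_Ico.1 hj).1)
        · exact_mod_cast G.card_cutDarts_le_sum_degree _
    _ = ∑ v, (G.degree v : ℝ) * ∑ j ∈ Ico (G.degree v) a, ((j : ℝ)⁻¹ - ((j : ℝ) + 1)⁻¹) := by
        simp_rw [sum_filter, mul_sum]
        rw [sum_comm]
        refine sum_congr rfl fun v _ => ?_
        rw [← Ico_filter_le_of_left_le (hmin v), sum_filter]
        exact sum_congr rfl fun j _ => by split_ifs <;> ring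
    _ = _ := sum_congr rfl fun v _ => mul_sum_Ico_inv_sub_inv (hk.trans_le (hmin v)) ha

lemma degreeCut_le_of_card_lt {k j : ℕ} (hkn : 2 * k ≤ Fintype.card V)
    (hj : #{v | j < G.degree v} < k) :
    (G.degreeCut j : ℝ) ≤ (Fintype.card V - k + 1) * (k - 1) := by
  set s : Finset V := {v | G.degree v ≤ j}
  have hcompl : (#sᶜ : ℝ) + 1 ≤ k := by
    exact_mod_cast (by simpa [s, compl_filter] using hj : #sᶜ < k)
  have hcut : (G.degreeCut j : ℝ) ≤ #s * #sᶜ := by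
    exact_mod_cast G.card_cutDarts_le_card_mul_card_compl s
  have hsum : (#s : ℝ) + #sᶜ = Fintype.card V := by exact_mod_cast card_add_card_compl s
  have hkn' : 2 * (k : ℝ) ≤ Fintype.card V := by exact_mod_cast hkn
  nlinarith

lemma sum_Ico_degreeCut_le_of_card_lt {k a b : ℕ} (ha : 0 < a) (hab : a ≤ b)
    (hkn : 2 * k ≤ Fintype.card V) (hfew : ∀ j ∈ Ico a b, #{v | j < G.degree v} < k) :
    ∑ j ∈ Ico a b, ((j : ℝ)⁻¹ - ((j : ℝ) + 1)⁻¹) * G.degreeCut j ≤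
      (Fintype.card V - k + 1) * (k - 1) * ((a : ℝ)⁻¹ - (b : ℝ)⁻¹) := by
  calc _ ≤ ∑ j ∈ Ico a b,
          ((j : ℝ)⁻¹ - ((j : ℝ) + 1)⁻¹) * ((Fintype.card V - k + 1) * (k - 1)) := by
        gcongr with j hj
        · exact inv_sub_inv_add_one_nonneg (ha.trans_le (mem_Ico.1 hj).1)
        · exact G.degreeCut_le_of_card_lt hkn (hfew j hj)
    _ = _ := by rw [← sum_mul, sum_Ico_inv_sub_inv hab, mul_comm]

lemma exists_degree_threshold {k : ℕ} (hkV : k < Fintype.card V)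
    (hmin : ∀ v, k ≤ G.degree v) :
    ∃ p, k ≤ p ∧ p ≤ Fintype.card V - 1 ∧ k ≤ #{v | p ≤ G.degree v} ∧
      ∀ j ∈ Ico p (Fintype.card V - 1), #{v | j < G.degree v} < k := by
  set P : ℕ → Prop := fun j => k ≤ #{v | j ≤ G.degree v}
  have hPk : P k := by simp [P, hmin, hkV.le]
  refine ⟨Nat.findGreatest P (Fintype.card V - 1), Nat.le_findGreatest (by omega) hPk,
    Nat.findGreatest_le _, Nat.findGreatest_spec (by omega) hPk, fun j hj => ?_⟩
  rw [mem_Ico] at hj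
  exact not_le.1 (Nat.findGreatest_is_greatest (P := P) (n := Fintype.card V - 1)
    (k := j + 1) (by omega) (by omega))

theorem card_sub_two_mul_rvar_le {k p : ℕ} (hk : 0 < k) (hkn : 2 * k ≤ Fintype.card V)
    (hmin : ∀ v, k ≤ G.degree v) (hkp : k ≤ p) (hpn : p ≤ Fintype.card V - 1)
    (hfew : ∀ j ∈ Ico p (Fintype.card V - 1), #{v | j < G.degree v} < k) (A : Finset V)
    (hA : ∀ a ∈ A, p ≤ G.degree a) :
    (Fintype.card V : ℝ) - 2 * Rvar G ≤ ∑ v ∈ Aᶜ, G.degreeDeficit p v +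
      (Fintype.card V - k + 1) * (k - 1) * ((p : ℝ)⁻¹ - ((Fintype.card V - 1 : ℕ) : ℝ)⁻¹) := by
  have hp : 0 < p := hk.trans_le hkp
  rw [G.card_sub_two_mul_rvar_eq_sum_degreeCut hk hmin, ← sum_Ico_consecutive _ hkp hpn]
  refine add_le_add ((G.sum_Ico_degreeCut_le hk hp hmin).trans_eq ?_)
    (G.sum_Ico_degreeCut_le_of_card_lt hp hpn hkn hfew)
  rw [← sum_compl_add_sum A, add_eq_left]
  refine sum_eq_zero fun a ha => ?_
  rw [degreeDeficit, min_eq_right (hA a ha), div_self (by positivity), sub_self]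

lemma card_sub_one_le_of_rvar_eq {k p : ℕ} (hk : 0 < k) (hkn : 2 * k ≤ Fintype.card V)
    (hmin : ∀ v, k ≤ G.degree v) (hkp : k ≤ p) (hpn : p ≤ Fintype.card V - 1)
    (hfew : ∀ j ∈ Ico p (Fintype.card V - 1), #{v | j < G.degree v} < k) {A : Finset V}
    (hA : #A = k) (hAp : ∀ a ∈ A, p ≤ G.degree a)
    (hT : (Fintype.card V : ℝ) - 2 * Rvar G =
      (Fintype.card V - k) * (1 - k / ((Fintype.card V : ℝ) - 1))) :
    Fintype.card V - 1 ≤ p := by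
  have hn : (1 : ℝ) < Fintype.card V := by exact_mod_cast (by omega : 1 < Fintype.card V)
  have hbound := G.card_sub_two_mul_rvar_le hk hkn hmin hkp hpn hfew A hAp
  rw [Nat.cast_pred (by omega), hT] at hbound
  have hgap :
      ((Fintype.card V : ℝ) + 1 - 2 * k) * ((p : ℝ)⁻¹ - ((Fintype.card V : ℝ) - 1)⁻¹) ≤ 0 := by
    linear_combination hbound + G.sum_compl_degreeDeficit_le hmin hkp hA
  have hkn' : (2 * k : ℝ) ≤ Fintype.card V := by exact_mod_cast hkn
  have hinv := sub_nonpos.1 (nonpos_of_mul_nonpos_right hgap (by linarith))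
  rw [inv_le_inv₀ (Nat.cast_pos.2 (by omega)) (by linarith), ← Nat.cast_pred (by omega)] at hinv
  exact_mod_cast hinv

lemma degree_eq_of_rvar_eq {k : ℕ} (hk : 0 < k) (hkn : 2 * k ≤ Fintype.card V)
    (hmin : ∀ v, k ≤ G.degree v) {A : Finset V} (hA : #A = k)
    (hAp : ∀ a ∈ A, Fintype.card V - 1 ≤ G.degree a)
    (hT : (Fintype.card V : ℝ) - 2 * Rvar G =
      (Fintype.card V - k) * (1 - k / ((Fintype.card V : ℝ) - 1))) :
    ∀ v ∉ A, G.degree v = k := by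
  have hkn1 : k ≤ Fintype.card V - 1 := by omega
  have hbound := G.card_sub_two_mul_rvar_le hk hkn hmin hkn1 le_rfl (by simp) A hAp
  rw [sub_self, mul_zero, add_zero, hT] at hbound
  have hdeficit : ∀ v ∈ Aᶜ, G.degreeDeficit (Fintype.card V - 1) v ≤
      1 - k / ((Fintype.card V - 1 : ℕ) : ℝ) := fun v _ => G.degreeDeficit_le (hmin v) hkn1
  have hsum : #Aᶜ • (1 - k / ((Fintype.card V - 1 : ℕ) : ℝ)) ≤
      ∑ v ∈ Aᶜ, G.degreeDeficit (Fintype.card V - 1) v := by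
    rwa [nsmul_eq_mul, card_compl, hA, Nat.cast_sub (by omega), Nat.cast_pred (by omega)]
  intro v hv
  have hveq := forall_eq_of_le_of_card_nsmul_le_sum hdeficit hsum v (mem_compl.2 hv)
  rwa [degreeDeficit, sub_right_inj, div_left_inj' (Nat.cast_ne_zero.2 (by omega)), Nat.cast_inj,
    min_eq_left (G.degree_le_card_sub_one v)] at hveq

lemma exists_equiv_fin_lt_iff_mem {n k : ℕ} (hcard : Fintype.card V = n) {A : Finset V}
    (hA : #A = k) : ∃ φ : V ≃ Fin n, ∀ v, (φ v : ℕ) < k ↔ v ∈ A := by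
  let e := Fintype.equivFinOfCardEq hcard
  have hkn : k ≤ n := hA ▸ hcard ▸ card_le_univ A
  have hcardA : Fintype.card {v // v ∈ A} = Fintype.card {v // (e v : ℕ) < k} := by
    rw [Fintype.card_coe, hA,
      Fintype.card_congr (e.subtypeEquiv (q := fun i : Fin n => (i : ℕ) < k) fun _ => Iff.rfl),
      Fintype.card_fin_lt_of_le hkn]
  let σ := Fintype.equivOfCardEq hcardA
  refine ⟨σ.extendSubtype.trans e, fun v => ⟨fun h => ?_, σ.extendSubtype_mem v⟩⟩
  by_contra hv
  exact σ.extendSubtype_not_mem v hv h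

lemma nonempty_iso_completeSplitGraph {n k : ℕ} (hcard : Fintype.card V = n) (A : Finset V)
    (hA : #A = k) (huniv : ∀ a ∈ A, G.IsUniversal a)
    (hadj : ∀ ⦃u v⦄, G.Adj u v → u ∈ A ∨ v ∈ A) :
    Nonempty (G ≃g completeSplitGraph n k) := by
  obtain ⟨φ, hφ⟩ := exists_equiv_fin_lt_iff_mem hcard hA
  refine ⟨⟨φ, fun {u v} => ?_⟩⟩
  change φ u ≠ φ v ∧ ((φ u : ℕ) < k ∨ (φ v : ℕ) < k) ↔ G.Adj u v
  rw [hφ, hφ, φ.injective.ne_iff]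
  exact ⟨fun ⟨hne, h⟩ => h.elim (fun hu => huniv u hu hne) fun hv => (huniv v hv hne.symm).symm,
    fun h => ⟨h.ne, hadj h⟩⟩

lemma nonempty_iso_completeSplitGraph_of_degree {k : ℕ} (A : Finset V) (hA : #A = k)
    (hAdeg : ∀ a ∈ A, Fintype.card V - 1 ≤ G.degree a) (hdeg : ∀ v ∉ A, G.degree v = k) :
    Nonempty (G ≃g completeSplitGraph (Fintype.card V) k) := by
  have huniv : ∀ a ∈ A, G.IsUniversal a := fun a ha =>
    (G.degree_eq_card_sub_one a).1 (le_antisymm (G.degree_le_card_sub_one a) (hAdeg a ha))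
  refine G.nonempty_iso_completeSplitGraph rfl A hA huniv fun u v huv => ?_
  by_contra! h
  have hN : A = G.neighborFinset u := eq_of_subset_of_card_le
    (fun a ha => (G.mem_neighborFinset u a).2
      (huniv a ha (show a ≠ u from fun hau => h.1 (hau ▸ ha))).symm)
    (by rw [card_neighborFinset_eq_degree, hdeg u h.1, hA])
  exact h.2 (hN ▸ (G.mem_neighborFinset u v).2 huv)

end SimpleGraph

theorem stmt_2_general {n k : ℕ} (hk : 1 ≤ k) (hkn : 2 * k ≤ n)
    {V : Type*} [Fintype V] (G : SimpleGraph V)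
    (hcard : Fintype.card V = n)
    (hmin : ∀ v : V, k ≤ G.degree v)
    (heq : Rvar G = (n : ℝ) / 2 - (1 / 2) * (1 / k - 1 / ((n : ℝ) - 1)) * k * (n - k)) :
    Nonempty (G ≃g completeSplitGraph n k) := by
  subst hcard
  have hT : (Fintype.card V : ℝ) - 2 * Rvar G =
      (Fintype.card V - k) * (1 - k / ((Fintype.card V : ℝ) - 1)) := by
    rw [heq]
    field_simp
    ring
  obtain ⟨p, hkp, hpn, hcount, hfew⟩ := G.exists_degree_threshold (by omega) hmin
  obtain ⟨A, hAsub, hA⟩ := exists_subset_card_eq hcount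
  have hAp : ∀ a ∈ A, p ≤ G.degree a := fun a ha => (mem_filter.1 (hAsub ha)).2
  obtain rfl : p = Fintype.card V - 1 :=
    le_antisymm hpn (G.card_sub_one_le_of_rvar_eq hk hkn hmin hkp hpn hfew hA hAp hT)
  exact G.nonempty_iso_completeSplitGraph_of_degree A hA hAp
    (G.degree_eq_of_rvar_eq hk hkn hmin hA hAp hT)

theorem stmt_2 {n k : ℕ} (hk : 1 ≤ k) (hkn : 2 * k ≤ n)
    {V : Type*} [Fintype V] (G : SimpleGraph V)
    (hcard : Fintype.card V = n) (hconn : G.Connected)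
    (hmin : ∀ v : V, k ≤ G.degree v)
    (heq : Rvar G = (n : ℝ) / 2 - (1 / 2) * (1 / k - 1 / ((n : ℝ) - 1)) * k * (n - k)) :
    Nonempty (G ≃g completeSplitGraph n k) :=
  stmt_2_general hk hkn G hcard hmin heq
end

section
/- Let n, p, k be integers with 0 ≤ p ≤ n, 1 ≤ k ≤ n−2 and n−k−1 ≤ p−1 whenever p > 0. Let G be a simple graph on n vertices whose complement is the disjoint union of an (n−k−1)-regular graph on p vertices and n−p isolated vertices. Then R'(G) = n/2 − (1/2)·(1/k − 1/(n−1))·p·(n−p). -/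
open scoped Classical

/-
For positive reals, `1 / max a b = (1/a + 1/b)/2 - |1/a - 1/b|/2`. Summed over the edges of a graph
without isolated vertices, the first term contributes `1/2` for every vertex, so
`R'(G) = n/2 - (1/2) ∑_{uv ∈ E} |1/d(u) - 1/d(v)|`. Only edges joining vertices of different
degrees contribute to the correction; here the `n - p` vertices outside the `k`-regular part are
universal of degree `n - 1`, so these are exactly the `p (n - p)` edges between the two parts.
-/

lemma one_div_max_eq_half_add_sub_abs_sub {a b : ℝ} (ha : 0 < a) (hb : 0 < b) :
    1 / max a b = (1 / a + 1 / b) / 2 - |1 / a - 1 / b| / 2 := by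
  rcases le_total a b with hab | hab
  · rw [max_eq_right hab, abs_of_nonneg (sub_nonneg.2 (one_div_le_one_div_of_le ha hab))]
    ring
  · rw [max_eq_left hab, abs_of_nonpos (sub_nonpos.2 (one_div_le_one_div_of_le hb hab))]
    ring

namespace SimpleGraph

open Finset

variable {V : Type*} [Fintype V] (G : SimpleGraph V)

theorem sum_sum_neighborFinset_eq_two_nsmul_sum_edgeFinset {M : Type*} [AddCommMonoid M]
    (f : Sym2 V → M) :
    ∑ v, ∑ w ∈ G.neighborFinset v, f s(v, w) = 2 • ∑ e ∈ G.edgeFinset, f e := by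
  have hfst : ∑ d : G.Dart, f d.edge = ∑ v, ∑ w ∈ G.neighborFinset v, f s(v, w) := by
    rw [← sum_fiberwise_of_maps_to (g := fun d : G.Dart => d.fst) (fun d _ => mem_univ d.fst)]
    refine sum_congr rfl fun v _ => ?_
    rw [G.dart_fst_fiber v, sum_image fun _ _ _ _ h => G.dartOfNeighborSet_injective v h,
      sum_subtype (G.neighborFinset v) (fun w => G.mem_neighborFinset v w)]
    rfl
  have hedge : ∑ d : G.Dart, f d.edge = 2 • ∑ e ∈ G.edgeFinset, f e := by
    rw [← sum_fiberwise_of_maps_to (fun (d : G.Dart) _ => mem_edgeFinset.2 d.edge_mem), smul_sum]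
    refine sum_congr rfl fun e he => ?_
    rw [sum_congr rfl fun d hd => congrArg f (mem_filter.1 hd).2, sum_const,
      G.dart_edge_fiber_card e (mem_edgeFinset.1 he)]
  rw [← hfst, hedge]

theorem two_mul_Rvar :
    2 * Rvar G = ∑ v, ∑ w ∈ G.neighborFinset v, 1 / max (G.degree v : ℝ) (G.degree w) := by
  rw [Rvar, two_mul, ← two_nsmul, ← sum_sum_neighborFinset_eq_two_nsmul_sum_edgeFinset]
  simp only [Sym2.lift_mk, Nat.cast_max]

theorem sum_sum_neighborFinset_apply_right {M : Type*} [AddCommMonoid M] (f : V → M) :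
    ∑ v, ∑ w ∈ G.neighborFinset v, f w = ∑ w, G.degree w • f w := by
  rw [sum_comm' (t' := univ) (s' := fun w => G.neighborFinset w) (by simp [adj_comm])]
  simp only [sum_const, card_neighborFinset_eq_degree]

theorem Rvar_eq_of_degree_pos (hG : ∀ v, 0 < G.degree v) :
    Rvar G = Fintype.card V / 2 -
      (∑ v, ∑ w ∈ G.neighborFinset v, |1 / (G.degree v : ℝ) - 1 / G.degree w|) / 4 := by
  have hdeg : ∀ v, (G.degree v : ℝ) ≠ 0 := fun v => Nat.cast_ne_zero.2 (hG v).ne'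
  have hleft : ∑ v, ∑ w ∈ G.neighborFinset v, 1 / (G.degree v : ℝ) = Fintype.card V := by
    simp [hdeg]
  have hright : ∑ v, ∑ w ∈ G.neighborFinset v, 1 / (G.degree w : ℝ) = Fintype.card V := by
    rw [G.sum_sum_neighborFinset_apply_right]
    simp [hdeg]
  have h2 : 2 * Rvar G = ((∑ v, ∑ w ∈ G.neighborFinset v, 1 / (G.degree v : ℝ)) +
      ∑ v, ∑ w ∈ G.neighborFinset v, 1 / (G.degree w : ℝ)) / 2 -
      (∑ v, ∑ w ∈ G.neighborFinset v, |1 / (G.degree v : ℝ) - 1 / G.degree w|) / 2 := by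
    simp only [two_mul_Rvar,
      one_div_max_eq_half_add_sub_abs_sub (Nat.cast_pos.2 (hG _)) (Nat.cast_pos.2 (hG _)),
      sum_sub_distrib, sum_add_distrib, sum_div, add_div]
  rw [hleft, hright] at h2
  linarith

theorem sum_sum_neighborFinset_abs_sub_of_isUniversal (S : Finset V)
    (huniv : ∀ v ∉ S, G.IsUniversal v) {φ : V → ℝ} {x y : ℝ}
    (hφS : ∀ v ∈ S, φ v = x) (hφSc : ∀ v ∉ S, φ v = y) :
    ∑ v, ∑ w ∈ G.neighborFinset v, |φ v - φ w| = 2 * (#S * #Sᶜ) * |x - y| := by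
  have hzero : ∀ v w, ¬G.Adj v w → |φ v - φ w| = 0 := by
    intro v w hvw
    obtain rfl | hne := eq_or_ne v w
    · simp
    have hv : v ∈ S := by_contra fun hv => hvw (huniv v hv hne)
    have hw : w ∈ S := by_contra fun hw => hvw (huniv w hw hne.symm).symm
    rw [hφS v hv, hφS w hw, sub_self, abs_zero]
  have hrowS : ∀ v ∈ S, ∑ w, |φ v - φ w| = #Sᶜ * |x - y| := fun v hv => by
    rw [← sum_add_sum_compl S,
      sum_eq_zero fun w hw => by rw [hφS v hv, hφS w hw, sub_self, abs_zero], zero_add,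
      sum_congr rfl fun w hw => by rw [hφS v hv, hφSc w (mem_compl.1 hw)], sum_const,
      nsmul_eq_mul]
  have hrowSc : ∀ v ∈ Sᶜ, ∑ w, |φ v - φ w| = #S * |x - y| := fun v hv => by
    rw [← sum_compl_add_sum S, sum_eq_zero fun w hw => by
        rw [hφSc v (mem_compl.1 hv), hφSc w (mem_compl.1 hw), sub_self, abs_zero],
      zero_add,
      sum_congr rfl fun w hw => by rw [hφSc v (mem_compl.1 hv), hφS w hw, abs_sub_comm],
      sum_const, nsmul_eq_mul]
  calc ∑ v, ∑ w ∈ G.neighborFinset v, |φ v - φ w| = ∑ v, ∑ w, |φ v - φ w| :=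
        sum_congr rfl fun v _ =>
          sum_subset (subset_univ _) fun w _ hw => hzero v w (by simpa using hw)
    _ = 2 * (#S * #Sᶜ) * |x - y| := by
        rw [← sum_add_sum_compl S, sum_congr rfl hrowS, sum_congr rfl hrowSc, sum_const, sum_const,
          nsmul_eq_mul, nsmul_eq_mul]
        ring

end SimpleGraph

theorem stmt_5_general {n p k : ℕ} (hk : 1 ≤ k) (hkn : k + 2 ≤ n)
    {V : Type*} [Fintype V] (G : SimpleGraph V)
    (hcard : Fintype.card V = n)
    -- the complement of `G` is the disjoint union of an `(n-k-1)`-regular graph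
    -- on `p` vertices (the set `S`) and `n - p` isolated vertices
    (S : Finset V) (hS : S.card = p)
    (hreg : ∀ v ∈ S, Gᶜ.degree v = n - k - 1)
    (hisol : ∀ v ∉ S, Gᶜ.degree v = 0) :
    Rvar G = (n : ℝ) / 2 - (1 / 2) * (1 / k - 1 / ((n : ℝ) - 1)) * p * (n - p) := by
  have hdeg : ∀ v, Gᶜ.degree v + G.degree v = n - 1 := fun v => by
    have := G.degree_lt_card_verts v
    rw [SimpleGraph.degree_compl]
    omega
  have hdegS : ∀ v ∈ S, G.degree v = k := fun v hv => by
    have := hdeg v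
    have := hreg v hv
    omega
  have hdegSc : ∀ v ∉ S, G.degree v = n - 1 := fun v hv => by
    have := hdeg v
    have := hisol v hv
    omega
  have hpos : ∀ v, 0 < G.degree v := fun v => by
    by_cases hv : v ∈ S
    · rw [hdegS v hv]; omega
    · rw [hdegSc v hv]; omega
  have huniv : ∀ v ∉ S, G.IsUniversal v := fun v hv =>
    (G.degree_eq_card_sub_one v).1 (hcard ▸ hdegSc v hv)
  have hn1 : ((n - 1 : ℕ) : ℝ) = n - 1 := by rw [Nat.cast_sub (by omega), Nat.cast_one]
  have hkn1 : 1 / ((n : ℝ) - 1) ≤ 1 / k :=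
    one_div_le_one_div_of_le (by exact_mod_cast hk) (by rw [← hn1]; exact_mod_cast (by omega))
  have hSc : (Sᶜ.card : ℝ) = n - p := by
    rw [Finset.card_compl, Nat.cast_sub S.card_le_univ, hcard, hS]
  rw [G.Rvar_eq_of_degree_pos hpos, G.sum_sum_neighborFinset_abs_sub_of_isUniversal S huniv
    (fun v hv => by rw [hdegS v hv]) (fun v hv => by rw [hdegSc v hv, hn1]), hSc, hS, hcard,
    abs_of_nonneg (sub_nonneg.2 hkn1)]
  ring

theorem stmt_5 {n p k : ℕ} (hp : p ≤ n) (hk : 1 ≤ k) (hkn : k + 2 ≤ n)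
    (hpk : 0 < p → n - k - 1 ≤ p - 1)
    {V : Type*} [Fintype V] (G : SimpleGraph V)
    (hcard : Fintype.card V = n)
    -- the complement of `G` is the disjoint union of an `(n-k-1)`-regular graph
    -- on `p` vertices (the set `S`) and `n - p` isolated vertices
    (S : Finset V) (hS : S.card = p)
    (hreg : ∀ v ∈ S, Gᶜ.degree v = n - k - 1)
    (hisol : ∀ v ∉ S, Gᶜ.degree v = 0) :
    Rvar G = (n : ℝ) / 2 - (1 / 2) * (1 / k - 1 / ((n : ℝ) - 1)) * p * (n - p) :=
  stmt_5_general hk hkn G hcard S hS hreg hisol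
end
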